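/- arXiv:1507.04313 — 5 statements merged into one kernel-verified Lean document; each statement's English description precedes it below -/
import Mathlib

section
/- For positive real numbers $\pi_1, \dots, \pi_d$ and real numbers $h_1 < h_2 < \dots < h_d$, the Jacobian determinant of the map $\phi : (\pi_1, \dots, \pi_d, h_1, \dots, h_d) \mapsto (\sum_j \pi_j, \sum_j \pi_j h_j, \sum_j \pi_j h_j^2, \dots, \sum_j \pi_j h_j^{2d-1})$ equals $(-1)^{d(d-1)/2} \, \pi_1 \cdots \pi_d \prod_{1 \le j < k \le d} (h_j - h_k)^4$. -/
/-!
Column `w_j` of the Jacobian is `(h_j ^ k)_k` and column `h_j` is `w_j (k h_j ^ (k - 1))_k`, so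
after pulling out the weights the Jacobian is a confluent Vandermonde determinant. To evaluate it,
take the Vandermonde matrix over `R[X]` at the `2d` nodes `h_j` and `h_j + X`. Subtracting the row
of `h_j` from that of `h_j + X` leaves a row divisible by `X`; after dividing out `X ^ d`, setting
`X = 0` turns these rows into the derivative rows. The Vandermonde product, divided by `X ^ d`,
becomes `V(h)² ∏_{i ≠ j} (h_i - h_j)` at `X = 0`, which is `(-1)^{d(d-1)/2} ∏_{i<j} (h_i - h_j)⁴`.
-/

open Finset Matrix Polynomial

namespace Fin

theorem prod_prod_Ioi_add {M : Type*} [CommMonoid M] {m n : ℕ} (f : Fin (m + n) → Fin (m + n) → M) :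
    ∏ i, ∏ j ∈ Ioi i, f i j =
      (∏ i : Fin m, ∏ j ∈ Ioi i, f (castAdd n i) (castAdd n j)) *
      (∏ i : Fin n, ∏ j ∈ Ioi i, f (natAdd m i) (natAdd m j)) *
      ∏ i : Fin m, ∏ j : Fin n, f (castAdd n i) (natAdd m j) := by
  have hcc (i j : Fin m) : castAdd n i < castAdd n j ↔ i < j := .rfl
  have hcn (i : Fin m) (j : Fin n) : castAdd n i < natAdd m j := by
    simp only [lt_def, val_castAdd, val_natAdd]; omega
  have hnc (i : Fin n) (j : Fin m) : ¬ natAdd m i < castAdd n j := by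
    simp only [lt_def, val_castAdd, val_natAdd]; omega
  simp only [← filter_lt_eq_Ioi, prod_filter, prod_univ_add, hcc, hcn, hnc, natAdd_lt_natAdd_iff,
    if_true, if_false, prod_const_one, mul_one, prod_mul_distrib]
  ac_rfl

theorem sum_card_Ioi (n : ℕ) : ∑ i : Fin n, #(Ioi i) = n * (n - 1) / 2 := by
  simp only [card_Ioi]
  rw [sum_univ_eq_sum_range (fun i => n - 1 - i), sum_range_reflect (fun i => i) n, sum_range_id]

end Fin

section CommRing

variable {R : Type*} [CommRing R] {n : ℕ}

theorem Polynomial.X_add_C_pow_eq_C_pow_add_X_mul_divX (a : R) (k : ℕ) :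
    (X + C a) ^ k = C a ^ k + X * divX ((X + C a) ^ k) := by
  conv_lhs => rw [← X_mul_divX_add ((X + C a) ^ k)]
  rw [coeff_zero_eq_eval_zero]
  simp [add_comm]

theorem Polynomial.eval_zero_divX_X_add_C_pow (a : R) (k : ℕ) :
    (divX ((X + C a) ^ k)).eval 0 = k * a ^ (k - 1) := by
  rw [← coeff_zero_eq_eval_zero, coeff_divX, coeff_X_add_C_pow]
  simp [mul_comm]

namespace Matrix

/-- Row `inl i` holds the monomials `v ^ k`, `k < 2n`, at `v i` and row `inr i` their derivatives.
Listing all value rows before all derivative rows, instead of interleaving them, is what produces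
the sign `(-1) ^ (n * (n - 1) / 2)` in `det_confluentVandermonde`. -/
def confluentVandermonde (v : Fin n → R) : Matrix (Fin n ⊕ Fin n) (Fin n ⊕ Fin n) R :=
  of fun r c =>
    let k : ℕ := finSumFinEquiv c
    Sum.elim (fun i => v i ^ k) (fun i => k * v i ^ (k - 1)) r

namespace ConfluentVandermonde

noncomputable def doubledVandermonde (v : Fin n → R) :
    Matrix (Fin n ⊕ Fin n) (Fin n ⊕ Fin n) R[X] :=
  of fun r c => Sum.elim (fun i => C (v i)) (fun i => X + C (v i)) r ^ (finSumFinEquiv c : ℕ)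

noncomputable def divXMatrix (v : Fin n → R) : Matrix (Fin n ⊕ Fin n) (Fin n ⊕ Fin n) R[X] :=
  of fun r c =>
    let k : ℕ := finSumFinEquiv c
    Sum.elim (fun i => C (v i) ^ k) (fun i => divX ((X + C (v i)) ^ k)) r

theorem det_doubledVandermonde (v : Fin n → R) :
    (doubledVandermonde v).det =
      (∏ i, ∏ j ∈ Ioi i, (C (v j) - C (v i))) ^ 2 * ∏ i, ∏ j, (X + C (v j) - C (v i)) := by
  rw [← det_submatrix_equiv_self finSumFinEquiv.symm]
  have : (doubledVandermonde v).submatrix finSumFinEquiv.symm finSumFinEquiv.symm =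
      vandermonde fun i => Sum.elim (fun i => C (v i)) (fun i => X + C (v i))
        (finSumFinEquiv.symm i) := by
    ext; simp [doubledVandermonde]
  rw [this, det_vandermonde, Fin.prod_prod_Ioi_add]
  simp only [finSumFinEquiv_symm_apply_castAdd, finSumFinEquiv_symm_apply_natAdd, Sum.elim_inl,
    Sum.elim_inr, add_sub_add_left_eq_sub]
  ring

theorem doubledVandermonde_eq_fromBlocks_mul (v : Fin n → R) :
    doubledVandermonde v = fromBlocks 1 0 1 ((X : R[X]) • 1) * divXMatrix v := by
  ext (i | i) c : 1
  · simp [doubledVandermonde, divXMatrix, mul_apply, one_apply]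
  · simpa [doubledVandermonde, divXMatrix, mul_apply, one_apply]
      using X_add_C_pow_eq_C_pow_add_X_mul_divX (v i) _

theorem det_divXMatrix (v : Fin n → R) :
    (divXMatrix v).det =
      (∏ i, ∏ j ∈ Ioi i, (C (v j) - C (v i))) ^ 2 * ∏ i, ∏ j ∈ {i}ᶜ, (X + C (v j) - C (v i)) := by
  have hdiag (i : Fin n) :
      ∏ j, (X + C (v j) - C (v i)) = X * ∏ j ∈ {i}ᶜ, (X + C (v j) - C (v i)) := by
    rw [Fintype.prod_eq_mul_prod_compl i, add_sub_cancel_right]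
  have h := det_doubledVandermonde v
  rw [doubledVandermonde_eq_fromBlocks_mul, det_mul, det_fromBlocks_zero₁₂, det_one, det_smul,
    det_one, Fintype.card_fin, one_mul, mul_one] at h
  simp only [hdiag, prod_mul_distrib, prod_const, card_univ, Fintype.card_fin] at h
  refine (isRegular_X_pow n).left.eq_iff.mp ?_
  rw [h]
  ring

theorem confluentVandermonde_eq_map_divXMatrix (v : Fin n → R) :
    confluentVandermonde v = (divXMatrix v).map (eval 0) := by
  ext (i | i) c <;> simp [confluentVandermonde, divXMatrix, eval_zero_divX_X_add_C_pow]

end ConfluentVandermonde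

open ConfluentVandermonde in
theorem det_confluentVandermonde (v : Fin n → R) :
    (confluentVandermonde v).det =
      (-1) ^ (n * (n - 1) / 2) * ∏ i, ∏ j ∈ Ioi i, (v i - v j) ^ 4 := by
  rw [confluentVandermonde_eq_map_divXMatrix, ← coe_evalRingHom, ← RingHom.mapMatrix_apply,
    ← RingHom.map_det, det_divXMatrix]
  simp only [map_mul, map_pow, map_prod, map_sub, map_add, coe_evalRingHom, eval_X, eval_C,
    zero_add]
  have hpair (a b : R) : (b - a) ^ 2 * ((b - a) * (a - b)) = -1 * (a - b) ^ 4 := by ring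
  simp only [← prod_prod_Ioi_mul_eq_prod_prod_off_diag, ← prod_pow, ← prod_mul_distrib, hpair]
  simp only [prod_mul_distrib, prod_const, prod_pow_eq_pow_sum, Fin.sum_card_Ioi]

end Matrix

end CommRing

section Moments

open ContinuousLinearMap

variable {𝕜 : Type*} [NontriviallyNormedField 𝕜] {ι : Type*} [Fintype ι]

noncomputable def momentFDeriv (w h : ι → 𝕜) (e : ℕ) : (ι → 𝕜) × (ι → 𝕜) →L[𝕜] 𝕜 :=
  ∑ i, (w i • (e * h i ^ (e - 1)) • (proj i).comp (snd 𝕜 _ _) + h i ^ e • (proj i).comp (fst 𝕜 _ _))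

theorem hasFDerivAt_moment (w h : ι → 𝕜) (e : ℕ) :
    HasFDerivAt (fun x : (ι → 𝕜) × (ι → 𝕜) => ∑ i, x.1 i * x.2 i ^ e) (momentFDeriv w h e) (w, h) :=
  HasFDerivAt.fun_sum fun i _ =>
    ((proj i).comp (fst 𝕜 _ _)).hasFDerivAt.mul
      ((hasDerivAt_pow e (h i)).comp_hasFDerivAt (w, h) ((proj i).comp (snd 𝕜 _ _)).hasFDerivAt)

variable {d : ℕ}

noncomputable def momentsFDeriv (w h : Fin d → 𝕜) :
    (Fin d → 𝕜) × (Fin d → 𝕜) →L[𝕜] (Fin d → 𝕜) × (Fin d → 𝕜) :=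
  (pi fun k : Fin d => momentFDeriv w h k).prod (pi fun k : Fin d => momentFDeriv w h (d + k))

theorem hasFDerivAt_moments (w h : Fin d → 𝕜) :
    HasFDerivAt (fun x : (Fin d → 𝕜) × (Fin d → 𝕜) =>
        ((fun k : Fin d => ∑ i, x.1 i * x.2 i ^ (k : ℕ)),
         (fun k : Fin d => ∑ i, x.1 i * x.2 i ^ (d + (k : ℕ)))))
      (momentsFDeriv w h) (w, h) :=
  (hasFDerivAt_pi.2 fun k : Fin d => hasFDerivAt_moment w h k).prodMk
    (hasFDerivAt_pi.2 fun k : Fin d => hasFDerivAt_moment w h (d + k))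

theorem toMatrix_momentsFDeriv (w h : Fin d → 𝕜) :
    LinearMap.toMatrix ((Pi.basisFun 𝕜 (Fin d)).prod (Pi.basisFun 𝕜 (Fin d)))
        ((Pi.basisFun 𝕜 (Fin d)).prod (Pi.basisFun 𝕜 (Fin d))) (momentsFDeriv w h).toLinearMap =
      (diagonal (Sum.elim 1 w) * confluentVandermonde h)ᵀ := by
  ext (k | k) (i | i) <;>
    simp [LinearMap.toMatrix_apply, momentsFDeriv, momentFDeriv, confluentVandermonde,
      Pi.single_apply, add_comm]

end Moments

theorem stmt_2_general (d : ℕ) (w h : Fin d → ℝ) :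
    LinearMap.det
      ((fderiv ℝ (fun x : (Fin d → ℝ) × (Fin d → ℝ) =>
          ((fun k : Fin d => ∑ i, x.1 i * x.2 i ^ (k : ℕ)),
           (fun k : Fin d => ∑ i, x.1 i * x.2 i ^ (d + (k : ℕ))))) (w, h)).toLinearMap)
      = (-1 : ℝ) ^ (d * (d - 1) / 2) * (∏ i, w i) *
          ∏ i, ∏ k ∈ Finset.Ioi i, (h i - h k) ^ 4 := by
  rw [(hasFDerivAt_moments w h).fderiv,
    ← LinearMap.det_toMatrix ((Pi.basisFun ℝ (Fin d)).prod (Pi.basisFun ℝ (Fin d))),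
    toMatrix_momentsFDeriv, det_transpose, det_mul, det_diagonal, det_confluentVandermonde,
    Fintype.prod_sum_type]
  simp only [Sum.elim_inl, Sum.elim_inr, Pi.one_apply, prod_const_one, one_mul]
  ring

/-- the Jacobian determinant of the moment map
`φ(π, h) = (∑ π_j h_j^k)_{0 ≤ k ≤ 2d-1}` equals
`(-1)^{d(d-1)/2} π_1 ⋯ π_d ∏_{j<k} (h_j - h_k)^4`. -/
theorem stmt_2 (d : ℕ) (hd : 0 < d) (w h : Fin d → ℝ)
    (hw : ∀ i, 0 < w i) (hmono : StrictMono h) :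
    LinearMap.det
      ((fderiv ℝ (fun x : (Fin d → ℝ) × (Fin d → ℝ) =>
          ((fun k : Fin d => ∑ i, x.1 i * x.2 i ^ (k : ℕ)),
           (fun k : Fin d => ∑ i, x.1 i * x.2 i ^ (d + (k : ℕ))))) (w, h)).toLinearMap)
      = (-1 : ℝ) ^ (d * (d - 1) / 2) * (∏ i, w i) *
          ∏ i, ∏ k ∈ Finset.Ioi i, (h i - h k) ^ 4 :=
  stmt_2_general d w h
end

section
/- The map $\phi : (\pi_1, \dots, \pi_d, h_1, \dots, h_d) \mapsto (\sum_j \pi_j, \sum_j \pi_j h_j, \dots, \sum_j \pi_j h_j^{2d-1})$ is injective on the open set $\{(\pi, h) \in \mathbb{R}^{2d} : \pi_1 > 0, \dots, \pi_d > 0, h_1 < h_2 < \dots < h_d\}$. -/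
open Finset

/-- If the first `s.card` power-sum moments of a weight function on a finite set of reals
vanish, all weights vanish. -/
lemma weights_eq_zero (s : Finset ℝ) (W : ℝ → ℝ)
    (h : ∀ k : ℕ, k < s.card → ∑ t ∈ s, W t * t ^ k = 0) :
    ∀ t ∈ s, W t = 0 := by
  have hinj : Function.Injective (fun i : Fin s.card => (s.orderEmbOfFin rfl i : ℝ)) :=
    (s.orderEmbOfFin rfl).injective
  have hsurj : ∀ t ∈ s, ∃ i : Fin s.card, (s.orderEmbOfFin rfl i : ℝ) = t := by
    intro t ht
    have : t ∈ Set.range (fun i : Fin s.card => (s.orderEmbOfFin rfl i : ℝ)) := by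
      rw [show Set.range (fun i : Fin s.card => (s.orderEmbOfFin rfl i : ℝ))
        = (s : Set ℝ) from s.range_orderEmbOfFin rfl]
      exact ht
    exact this
  have hsum : ∀ k : Fin s.card,
      ∑ i : Fin s.card, (W (s.orderEmbOfFin rfl i)) * (s.orderEmbOfFin rfl i : ℝ) ^ (k : ℕ) = 0 := by
    intro k
    rw [← h k k.2]
    exact Finset.sum_bij (fun i _ => (s.orderEmbOfFin rfl i : ℝ))
      (fun i _ => s.orderEmbOfFin_mem rfl i)
      (fun i _ j _ hij => hinj hij)
      (fun t ht => by obtain ⟨i, hi⟩ := hsurj t ht; exact ⟨i, mem_univ i, hi⟩)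
      (fun i _ => rfl)
  have hzero := Matrix.eq_zero_of_forall_pow_sum_mul_pow_eq_zero hinj
    (v := fun i => W (s.orderEmbOfFin rfl i)) hsum
  intro t ht
  obtain ⟨i, hi⟩ := hsurj t ht
  rw [← hi]
  exact congrFun hzero i

/-- the moment map `φ(π, h) = (∑ π_j h_j^k)_{0 ≤ k ≤ 2d-1}` is injective
on the set of positive weights and strictly increasing locations. -/
theorem stmt_3 (d : ℕ) (hd : 0 < d) :
    Set.InjOn
      (fun x : (Fin d → ℝ) × (Fin d → ℝ) =>
        fun k : Fin (2 * d) => ∑ i, x.1 i * x.2 i ^ (k : ℕ))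
      {x : (Fin d → ℝ) × (Fin d → ℝ) | (∀ i, 0 < x.1 i) ∧ StrictMono x.2} := by
  rintro ⟨π, f⟩ ⟨hπ, hf⟩ ⟨ρ, g⟩ ⟨hρ, hg⟩ heq
  replace hπ : ∀ i, 0 < π i := hπ
  replace hρ : ∀ i, 0 < ρ i := hρ
  replace hf : StrictMono f := hf
  replace hg : StrictMono g := hg
  simp only at heq
  have hmom : ∀ k : ℕ, k < 2 * d → ∑ i, π i * f i ^ k = ∑ i, ρ i * g i ^ k := by
    intro k hk
    exact congrFun heq ⟨k, hk⟩
  set s : Finset ℝ := (image f univ) ∪ (image g univ) with hs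
  have hfs : ∀ i, f i ∈ s := fun i => mem_union_left _ (mem_image_of_mem f (mem_univ i))
  have hgs : ∀ i, g i ∈ s := fun i => mem_union_right _ (mem_image_of_mem g (mem_univ i))
  have hcard : s.card ≤ 2 * d := by
    calc s.card ≤ (image f univ).card + (image g univ).card := card_union_le _ _
    _ ≤ d + d := by gcongr <;> exact (card_image_le.trans (by simp))
    _ = 2 * d := by ring
  set W : ℝ → ℝ := fun t =>
    (∑ i, if f i = t then π i else 0) - (∑ i, if g i = t then ρ i else 0) with hWdef
  have expand : ∀ (c : Fin d → ℝ) (u : Fin d → ℝ) (k : ℕ), (∀ i, u i ∈ s) →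
      ∑ t ∈ s, (∑ i, if u i = t then c i else 0) * t ^ k = ∑ i, c i * u i ^ k := by
    intro c u k hu
    simp only [Finset.sum_mul]
    rw [Finset.sum_comm]
    apply Finset.sum_congr rfl
    intro i _
    rw [Finset.sum_eq_single (u i)]
    · simp
    · intro t _ htne; simp [htne.symm]
    · intro habs; exact absurd (hu i) habs
  have key : ∀ t ∈ s, W t = 0 := by
    apply weights_eq_zero
    intro k hk
    have hk2 : k < 2 * d := lt_of_lt_of_le hk hcard
    simp only [hWdef, sub_mul, Finset.sum_sub_distrib]
    rw [expand π f k hfs, expand ρ g k hgs, hmom k hk2, sub_self]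
  have hWf : ∀ i, π i = ∑ j, if g j = f i then ρ j else 0 := by
    intro i
    have h0 := sub_eq_zero.mp (key (f i) (hfs i))
    have hfi : (∑ j, if f j = f i then π j else 0) = π i := by
      rw [Finset.sum_eq_single i (fun j _ hji => if_neg (fun h => hji (hf.injective h)))
        (by simp), if_pos rfl]
    rw [hfi] at h0
    exact h0
  have hWg : ∀ i, ρ i = ∑ j, if f j = g i then π j else 0 := by
    intro i
    have h0 := sub_eq_zero.mp (key (g i) (hgs i))
    have hgi : (∑ j, if g j = g i then ρ j else 0) = ρ i := by
      rw [Finset.sum_eq_single i (fun j _ hji => if_neg (fun h => hji (hg.injective h)))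
        (by simp), if_pos rfl]
    rw [hgi] at h0
    exact h0.symm
  have hsub1 : ∀ i, ∃ j, g j = f i := by
    intro i
    by_contra hcon
    push_neg at hcon
    have hz : (∑ j, if g j = f i then ρ j else 0) = 0 :=
      Finset.sum_eq_zero fun j _ => if_neg (hcon j)
    have := hWf i
    rw [hz] at this
    exact absurd (hπ i) (by rw [this]; exact lt_irrefl 0)
  have hsub2 : ∀ i, ∃ j, f j = g i := by
    intro i
    by_contra hcon
    push_neg at hcon
    have hz : (∑ j, if f j = g i then π j else 0) = 0 :=
      Finset.sum_eq_zero fun j _ => if_neg (hcon j)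
    have := hWg i
    rw [hz] at this
    exact absurd (hρ i) (by rw [this]; exact lt_irrefl 0)
  have himeq : image f univ = image g univ := by
    apply Finset.Subset.antisymm
    · intro t ht
      obtain ⟨i, _, rfl⟩ := mem_image.mp ht
      obtain ⟨j, hj⟩ := hsub1 i
      exact mem_image.mpr ⟨j, mem_univ j, hj⟩
    · intro t ht
      obtain ⟨i, _, rfl⟩ := mem_image.mp ht
      obtain ⟨j, hj⟩ := hsub2 i
      exact mem_image.mpr ⟨j, mem_univ j, hj⟩
  have hcardf : (image f univ).card = d := by
    rw [Finset.card_image_of_injective _ hf.injective, card_univ, Fintype.card_fin]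
  have hfg : f = g := by
    have h1 : f = (image f univ).orderEmbOfFin hcardf :=
      Finset.orderEmbOfFin_unique hcardf (fun i => mem_image_of_mem f (mem_univ i)) hf
    have h2 : g = (image f univ).orderEmbOfFin hcardf :=
      Finset.orderEmbOfFin_unique hcardf
        (fun i => himeq ▸ mem_image_of_mem g (mem_univ i)) hg
    rw [h1, h2]
  have hπρ : π = ρ := by
    funext i
    rw [hWf i, hfg, Finset.sum_eq_single i (fun j _ hji => if_neg (fun h => hji (hg.injective h)))
      (by simp), if_pos rfl]
  exact Prod.ext hπρ hfg
end

section
/- Let $\{F(\cdot,\theta), \theta \in \Theta\}$ be a $k$-strongly identifiable family of distribution functions on a compact $\Theta \subset \mathbb{R}$, with $F^{(p)}(x,\theta)$ (derivatives in $\theta$) jointly lower semi-continuous appropriately. Then for every $\eps > 0$ there exists $c(\eps) > 0$ such that for all $\eps$-separated tuples $(\theta_1,\dots,\theta_m) \in \Theta^m$ and all coefficient arrays $(\alpha_{p,j})_{0 \le p \le k, 1 \le j \le m}$: $\| \sum_{p=0}^k \sum_{j=1}^m \alpha_{p,j} F^{(p)}(\cdot, \theta_j) \|_\infty \ge c(\eps)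 \|\alpha\|$. -/
/-!
The pairs `(θ, α)` with `θ` an `ε`-separated tuple in `Θ` and `‖α‖ = 1` form a compact set, on
which `(θ, α) ↦ sup_x |∑ α_{p,j} F^{(p)}(x, θ_j)|` is lower semicontinuous (a supremum of
continuous functions) and, by strong identifiability, positive (separation makes the `θ_j`
distinct). Its minimum `c(ε) > 0` gives the bound on the unit sphere, and homogeneity in `α`
gives it everywhere.
-/

open Set

section

variable {ι X : Type*} [TopologicalSpace X]

/-- Capping at `1` keeps the supremum finite, so it is a real-valued lower semicontinuous
function and attains its minimum on `K`. -/
theorem IsCompact.exists_pos_forall_exists_le_abs [Nonempty ι] {K : Set X} (hK : IsCompact K)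
    {g : ι → X → ℝ} (hg : ∀ i, Continuous (g i)) (hne : ∀ s ∈ K, ∃ i, g i s ≠ 0) :
    ∃ c > 0, ∀ s ∈ K, ∃ i, c ≤ |g i s| := by
  rcases K.eq_empty_or_nonempty with rfl | hKne
  · exact ⟨1, one_pos, by simp⟩
  set φ : X → ℝ := fun s => ⨆ i, min |g i s| 1
  have hbdd : ∀ s, BddAbove (range fun i => min |g i s| 1) :=
    fun s => ⟨1, by rintro _ ⟨i, rfl⟩; exact min_le_right _ _⟩
  have hφ : LowerSemicontinuous φ :=
    lowerSemicontinuous_ciSup hbdd fun i => ((hg i).abs.min continuous_const).lowerSemicontinuous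
  obtain ⟨s₀, hs₀, hmin⟩ := (hφ.lowerSemicontinuousOn K).exists_isMinOn hKne hK
  have hφs₀ : 0 < φ s₀ := by
    obtain ⟨i, hi⟩ := hne s₀ hs₀
    exact (lt_min (abs_pos.mpr hi) one_pos).trans_le (le_ciSup (hbdd s₀) i)
  refine ⟨φ s₀ / 2, half_pos hφs₀, fun s hs => ?_⟩
  obtain ⟨i, hi⟩ := exists_lt_of_lt_ciSup ((half_lt_self hφs₀).trans_le (hmin hs))
  exact ⟨i, hi.le.trans (min_le_left _ _)⟩

end

section

variable {ι P E : Type*} [Nonempty ι] [TopologicalSpace P]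
  [NormedAddCommGroup E] [NormedSpace ℝ E] [FiniteDimensional ℝ E]

theorem IsCompact.exists_pos_mul_norm_le_of_homogeneous {A : Set P} (hA : IsCompact A)
    {g : ι → P → E → ℝ} (hg : ∀ i, Continuous (Function.uncurry (g i)))
    (hsmul : ∀ i θ (a : ℝ) v, g i θ (a • v) = a * g i θ v)
    (hne : ∀ θ ∈ A, ∀ v ≠ 0, ∃ i, g i θ v ≠ 0) :
    ∃ c > 0, ∀ θ ∈ A, ∀ v (y : ℝ), (∀ i, |g i θ v| ≤ y) → c * ‖v‖ ≤ y := by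
  have hK : IsCompact (A ×ˢ Metric.sphere (0 : E) 1) := hA.prod (isCompact_sphere 0 1)
  obtain ⟨c, hc, hcK⟩ := hK.exists_pos_forall_exists_le_abs hg <| by
    rintro ⟨θ, v⟩ ⟨hθ, hv⟩
    exact hne θ hθ v (ne_zero_of_mem_unit_sphere ⟨v, hv⟩)
  refine ⟨c, hc, fun θ hθ v y hy => ?_⟩
  rcases eq_or_ne v 0 with rfl | hv
  · obtain i := Classical.arbitrary ι
    have h0 : g i θ 0 = 0 := by simpa using hsmul i θ 0 0
    simpa [h0] using hy i
  have hvn : 0 < ‖v‖ := norm_pos_iff.mpr hv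
  obtain ⟨i, hi⟩ := hcK (θ, ‖v‖⁻¹ • v) ⟨hθ, mem_sphere_zero_iff_norm.mpr (norm_smul_inv_norm hv)⟩
  have : c ≤ ‖v‖⁻¹ * y := by
    calc c ≤ |g i θ (‖v‖⁻¹ • v)| := hi
      _ = ‖v‖⁻¹ * |g i θ v| := by rw [hsmul, abs_mul, abs_of_pos (inv_pos.mpr hvn)]
      _ ≤ ‖v‖⁻¹ * y := by gcongr; exact hy i
  rwa [le_inv_mul_iff₀ hvn, mul_comm] at this

end

theorem isCompact_setOf_separated {Θ : Set ℝ} (hΘ : IsCompact Θ) (m : ℕ) (ε : ℝ) :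
    IsCompact {θ : Fin m → ℝ | (∀ i, θ i ∈ Θ) ∧ ∀ i i', i ≠ i' → ε ≤ |θ i - θ i'|} := by
  have hclosed : IsClosed {θ : Fin m → ℝ | ∀ i i', i ≠ i' → ε ≤ |θ i - θ i'|} := by
    simp only [ofPred_forall]
    exact isClosed_iInter fun i => isClosed_iInter fun i' => isClosed_iInter fun _ =>
      isClosed_le continuous_const (by fun_prop)
  convert (isCompact_univ_pi fun _ => hΘ).inter_right hclosed using 1
  ext θ
  simp

theorem injective_of_separated {m : ℕ} {θ : Fin m → ℝ} {ε : ℝ} (hε : 0 < ε)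
    (hsep : ∀ i i', i ≠ i' → ε ≤ |θ i - θ i'|) : Function.Injective θ := by
  intro i i' h
  by_contra hne
  have := hsep i i' hne
  rw [h, sub_self, abs_zero] at this
  linarith

noncomputable def derivMixture {k m : ℕ} (F : ℝ → ℝ → ℝ) (x : ℝ) (θ : Fin m → ℝ)
    (α : Fin (k + 1) → Fin m → ℝ) : ℝ :=
  ∑ p, ∑ i, α p i * iteratedDeriv (p : ℕ) (F x) (θ i)

theorem derivMixture_smul {k m : ℕ} (F : ℝ → ℝ → ℝ) (x : ℝ) (θ : Fin m → ℝ) (a : ℝ)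
    (α : Fin (k + 1) → Fin m → ℝ) : derivMixture F x θ (a • α) = a * derivMixture F x θ α := by
  simp only [derivMixture, Finset.mul_sum, Pi.smul_apply, smul_eq_mul, mul_assoc]

theorem continuous_uncurry_derivMixture {k m : ℕ} {F : ℝ → ℝ → ℝ}
    (hcont : ∀ p ≤ k, ∀ x : ℝ, Continuous fun θ => iteratedDeriv p (F x) θ) (x : ℝ) :
    Continuous (Function.uncurry (derivMixture (k := k) (m := m) F x)) := by
  have := fun p : Fin (k + 1) => hcont p p.is_le x
  unfold derivMixture
  fun_prop

/-- for a `k`-strongly identifiable family with `θ`-continuous derivatives,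
for each `ε > 0` there is `c(ε) > 0` such that any uniform bound `y` on
`|∑_p ∑_j α_{p,j} F^{(p)}(x, θ_j)|` over `x` dominates `c(ε)·‖α‖`,
uniformly over ε-separated tuples `θ` in `Θ`; i.e. the sup norm is `≥ c(ε)‖α‖`. -/
theorem stmt_5 (Θ : Set ℝ) (hΘ : IsCompact Θ) (k m : ℕ) (F : ℝ → ℝ → ℝ)
    (hcont : ∀ p ≤ k, ∀ x : ℝ, Continuous fun θ => iteratedDeriv p (F x) θ)
    (hident : ∀ (M : ℕ) (θ : Fin M → ℝ), (∀ i, θ i ∈ Θ) → Function.Injective θ →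
      ∀ α : Fin (k + 1) → Fin M → ℝ,
        (∀ x : ℝ, ∑ p, ∑ i, α p i * iteratedDeriv (p : ℕ) (F x) (θ i) = 0) → α = 0)
    (ε : ℝ) (hε : 0 < ε) :
    ∃ c > 0, ∀ θ : Fin m → ℝ, (∀ i, θ i ∈ Θ) → (∀ i i', i ≠ i' → ε ≤ |θ i - θ i'|) →
      ∀ (α : Fin (k + 1) → Fin m → ℝ) (y : ℝ),
        (∀ x : ℝ, |∑ p, ∑ i, α p i * iteratedDeriv (p : ℕ) (F x) (θ i)| ≤ y) →
        c * ‖α‖ ≤ y := by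
  obtain ⟨c, hc, hbound⟩ :=
    (isCompact_setOf_separated hΘ m ε).exists_pos_mul_norm_le_of_homogeneous
      (continuous_uncurry_derivMixture hcont) (derivMixture_smul F) <| by
      rintro θ ⟨hθ, hsep⟩ α hα
      by_contra! hzero
      exact hα (hident m θ hθ (injective_of_separated hε hsep) α hzero)
  exact ⟨c, hc, fun θ hθ hsep α y hy => hbound θ ⟨hθ, hsep⟩ α y hy⟩
end

section
/- Consider an exponential family $f(x,\theta) = h(x)g(\theta)e^{\theta T(x)}$ with natural parameter space $\Theta_0 \subset \mathbb{R}$ open, $g$ smooth, and a compact $\Theta$ whose $\eps$-neighborhood lies in $\Theta_0$. Then for all $p \in \mathbb{N}$ and $q > 0$, the quantity $E_{p,q}(\theta,\theta',\theta'') = \mathbb{E}_\theta |f^{(p)}(\cdot,\theta')/f(\cdot,\theta'')|^q$ (derivatives in the parameter) satisfies: it is finite whenever $|\theta' - \theta''| < \eps/q$, and admits the closed form $E_{p,q}(\theta,\theta',\theta'') = \frac{g(\theta)}{g^q(\theta'')g(\theta + q(\theta'-\theta''))} \mathbb{E}_{\theta + q(\theta'-\theta'')}\left|\sum_{k=0}^p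 \binom{p}{k} g^{(k)}(\theta')T^{p-k}(\cdot)\right|^q$. -/
open MeasureTheory


lemma aux_cmul {f : ℝ → ℝ} (hf : ContDiff ℝ (⊤ : ℕ∞) f) (c : ℝ) (n : ℕ) :
    iteratedDeriv n (fun t => c * f t) = fun t => c * iteratedDeriv n f t := by
  induction n with
  | zero => simp [iteratedDeriv_zero]
  | succ n ih =>
    funext t
    rw [iteratedDeriv_succ, ih, iteratedDeriv_succ]
    exact deriv_const_mul c ((hf.differentiable_iteratedDeriv n (by exact_mod_cast ENat.natCast_lt_top n)).differentiableAt)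

lemma aux_leibniz {g : ℝ → ℝ} (hg : ContDiff ℝ (⊤ : ℕ∞) g) (c : ℝ) (p : ℕ) :
    iteratedDeriv p (fun t => g t * Real.exp (t * c)) =
      fun t => (∑ k ∈ Finset.range (p + 1),
        (p.choose k : ℝ) * iteratedDeriv k g t * c ^ (p - k)) * Real.exp (t * c) := by
  induction p with
  | zero => simp [iteratedDeriv_zero]
  | succ p ih =>
    funext t
    rw [iteratedDeriv_succ, ih]
    have hS : HasDerivAt
        (fun t => ∑ k ∈ Finset.range (p + 1),
          (p.choose k : ℝ) * iteratedDeriv k g t * c ^ (p - k))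
        (∑ k ∈ Finset.range (p + 1),
          (p.choose k : ℝ) * iteratedDeriv (k + 1) g t * c ^ (p - k)) t := by
      refine HasDerivAt.fun_sum fun k _ => ?_
      have h1 : HasDerivAt (iteratedDeriv k g) (iteratedDeriv (k + 1) g t) t := by
        rw [iteratedDeriv_succ]
        exact ((hg.differentiable_iteratedDeriv k (by exact_mod_cast ENat.natCast_lt_top k)).differentiableAt).hasDerivAt
      simpa [mul_assoc, mul_comm, mul_left_comm] using (h1.const_mul (p.choose k : ℝ)).mul_const (c ^ (p - k))
    have hE : HasDerivAt (fun t => Real.exp (t * c)) (Real.exp (t * c) * c) t := by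
      simpa using ((hasDerivAt_id t).mul_const c).exp
    rw [(hS.fun_mul hE).deriv]
    have key : (∑ k ∈ Finset.range (p + 1),
          (p.choose k : ℝ) * iteratedDeriv (k + 1) g t * c ^ (p - k))
        + (∑ k ∈ Finset.range (p + 1),
          (p.choose k : ℝ) * iteratedDeriv k g t * c ^ (p - k)) * c
        = ∑ k ∈ Finset.range (p + 1 + 1),
          ((p + 1).choose k : ℝ) * iteratedDeriv k g t * c ^ (p + 1 - k) := by
      rw [Finset.sum_range_succ' (fun k => ((p + 1).choose k : ℝ) * iteratedDeriv k g t * c ^ (p + 1 - k)) (p + 1)]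
      have e1 : ∀ k ∈ Finset.range (p + 1),
          ((p + 1).choose (k + 1) : ℝ) * iteratedDeriv (k + 1) g t * c ^ (p + 1 - (k + 1))
          = (p.choose k : ℝ) * iteratedDeriv (k + 1) g t * c ^ (p - k)
            + (p.choose (k + 1) : ℝ) * iteratedDeriv (k + 1) g t * c ^ (p - k) := by
        intro k _
        rw [Nat.choose_succ_succ, Nat.succ_sub_succ]
        push_cast
        ring
      rw [Finset.sum_congr rfl e1, Finset.sum_add_distrib]
      have e2 : (∑ k ∈ Finset.range (p + 1),
          (p.choose k : ℝ) * iteratedDeriv k g t * c ^ (p - k)) * c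
          = ∑ k ∈ Finset.range (p + 1),
            (p.choose (k + 1) : ℝ) * iteratedDeriv (k + 1) g t * c ^ (p - k)
            + ((p + 1).choose 0 : ℝ) * iteratedDeriv 0 g t * c ^ (p + 1 - 0) := by
        rw [Finset.sum_range_succ
          (fun k => (p.choose (k + 1) : ℝ) * iteratedDeriv (k + 1) g t * c ^ (p - k)) p]
        simp only [Nat.choose_succ_self, Nat.cast_zero, zero_mul, add_zero]
        rw [Finset.sum_mul,
          Finset.sum_range_succ' (fun k => (p.choose k : ℝ) * iteratedDeriv k g t * c ^ (p - k) * c) p]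
        congr 1
        · refine Finset.sum_congr rfl fun k hk => ?_
          have hk' : k < p := Finset.mem_range.mp hk
          have : p - (k + 1) + 1 = p - k := by omega
          rw [mul_assoc, ← pow_succ, this]
        · simp [pow_succ]
          ring
      rw [e2]
      ring
    rw [← key]
    ring

lemma aux_ptwise (h T g : ℝ → ℝ) (hg : ContDiff ℝ (⊤ : ℕ∞) g) (q θ θ' θ'' : ℝ) (hq : 0 < q)
    (hθ'' : 0 < g θ'') (hτ : 0 < g (θ + q * (θ' - θ''))) (hh : ∀ x, 0 ≤ h x) (p : ℕ) (x : ℝ) :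
    |iteratedDeriv p (fun t => h x * g t * Real.exp (t * T x)) θ' /
            (h x * g θ'' * Real.exp (θ'' * T x))| ^ q *
          (h x * g θ * Real.exp (θ * T x))
      = g θ / (g θ'' ^ q * g (θ + q * (θ' - θ''))) *
        (|∑ k ∈ Finset.range (p + 1),
              (p.choose k : ℝ) * iteratedDeriv k g θ' * T x ^ (p - k)| ^ q *
          (h x * g (θ + q * (θ' - θ'')) * Real.exp ((θ + q * (θ' - θ'')) * T x))) := by
  have hfun : (fun t => h x * g t * Real.exp (t * T x))
      = fun t => h x * (g t * Real.exp (t * T x)) := by funext t; ring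
  have hg' : ContDiff ℝ (⊤ : ℕ∞) (fun t => g t * Real.exp (t * T x)) :=
    hg.mul (Real.contDiff_exp.comp (contDiff_id.mul contDiff_const))
  rw [hfun, aux_cmul hg' (h x) p, aux_leibniz hg (T x) p]
  set S := ∑ k ∈ Finset.range (p + 1),
      (p.choose k : ℝ) * iteratedDeriv k g θ' * T x ^ (p - k) with hS
  rcases eq_or_ne (h x) 0 with h0 | h0
  · simp [h0, Real.zero_rpow hq.ne']
  · have hxpos : 0 < h x := lt_of_le_of_ne (hh x) (Ne.symm h0)
    have E1 : (0:ℝ) < Real.exp (θ' * T x) := Real.exp_pos _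
    have E2 : (0:ℝ) < Real.exp (θ'' * T x) := Real.exp_pos _
    have hr : h x * (S * Real.exp (θ' * T x)) / (h x * g θ'' * Real.exp (θ'' * T x))
        = S * (Real.exp (θ' * T x) / (g θ'' * Real.exp (θ'' * T x))) := by
      field_simp
    rw [hr, abs_mul, abs_of_pos (by positivity : (0:ℝ) < Real.exp (θ' * T x) / (g θ'' * Real.exp (θ'' * T x))),
      Real.mul_rpow (abs_nonneg _) (by positivity),
      Real.div_rpow (le_of_lt E1) (by positivity),
      Real.mul_rpow hθ''.le (le_of_lt E2)]
    have eq1 : Real.exp (θ' * T x) ^ q = Real.exp (θ' * T x * q) := by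
      rw [← Real.exp_mul]
    have eq2 : Real.exp (θ'' * T x) ^ q = Real.exp (θ'' * T x * q) := by
      rw [← Real.exp_mul]
    rw [eq1, eq2]
    have hexp : Real.exp ((θ + q * (θ' - θ'')) * T x)
        = Real.exp (θ * T x) * Real.exp (θ' * T x * q) / Real.exp (θ'' * T x * q) := by
      rw [eq_div_iff (Real.exp_ne_zero _), ← Real.exp_add, ← Real.exp_add]; ring_nf
    have hgq : (0:ℝ) < g θ'' ^ q := Real.rpow_pos_of_pos hθ'' q
    rw [hexp]
    field_simp

lemma aux_int (lam : Measure ℝ) [SigmaFinite lam] (h T g : ℝ → ℝ) (Θ0 : Set ℝ)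
    (hgpos : ∀ θ ∈ Θ0, 0 < g θ) (hh : ∀ x, 0 ≤ h x)
    (hmom : ∀ θ ∈ Θ0, ∀ r : ℕ,
      Integrable (fun x => |T x| ^ r * (h x * g θ * Real.exp (θ * T x))) lam)
    (q : ℝ) (hq : 0 < q) (p : ℕ) (a : ℕ → ℝ)
    (τ : ℝ) (hτ : τ ∈ Θ0) (T' : ℝ → ℝ) (hT'm : AEMeasurable T' lam)
    (hT'eq : ∀ x, h x ≠ 0 → T' x = T x) :
    Integrable (fun x => |∑ k ∈ Finset.range (p + 1), a k * T x ^ (p - k)| ^ q *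
          (h x * g τ * Real.exp (τ * T x))) lam := by
  have hgτ : 0 < g τ := hgpos τ hτ
  have hFint : Integrable (fun x => |∑ k ∈ Finset.range (p + 1), a k * T' x ^ (p - k)| ^ q *
      (h x * g τ * Real.exp (τ * T x))) lam := by
    have hDτ : AEMeasurable (fun x => h x * g τ * Real.exp (τ * T x)) lam := by
      have := (hmom τ hτ 0).aemeasurable
      simpa using this
    have hFm : AEStronglyMeasurable (fun x => |∑ k ∈ Finset.range (p + 1), a k * T' x ^ (p - k)| ^ q *
        (h x * g τ * Real.exp (τ * T x))) lam := by
      have hc : Measurable (fun y : ℝ => |∑ k ∈ Finset.range (p + 1), a k * y ^ (p - k)| ^ q) :=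
        ((Finset.measurable_sum _ fun k _ =>
          (measurable_id.pow_const _).const_mul _).abs).pow measurable_const
      exact ((hc.comp_aemeasurable hT'm).mul hDτ).aestronglyMeasurable
    set M : ℝ := ∑ k ∈ Finset.range (p + 1), |a k| with hM
    set N : ℕ := ⌈(p : ℝ) * q⌉₊ with hN
    have hM0 : 0 ≤ M := Finset.sum_nonneg fun k _ => abs_nonneg _
    have hmaj : Integrable
        (fun x => M ^ q * ((1 + |T x|) ^ N * (h x * g τ * Real.exp (τ * T x)))) lam := by
      apply Integrable.const_mul
      have : (fun x => (1 + |T x|) ^ N * (h x * g τ * Real.exp (τ * T x)))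
          = fun x => ∑ j ∈ Finset.range (N + 1),
              (N.choose j : ℝ) * (|T x| ^ (N - j) * (h x * g τ * Real.exp (τ * T x))) := by
        funext x
        rw [add_pow, Finset.sum_mul]
        refine Finset.sum_congr rfl fun j _ => by ring
      rw [this]
      exact integrable_finset_sum _ fun j _ => (hmom τ hτ (N - j)).const_mul _
    refine hmaj.mono' hFm (Filter.Eventually.of_forall fun x => ?_)
    have hDτpos : 0 ≤ h x * g τ * Real.exp (τ * T x) :=
      mul_nonneg (mul_nonneg (hh x) hgτ.le) (Real.exp_pos _).le
    have hB : (1:ℝ) ≤ 1 + |T x| := by simp [abs_nonneg]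
    rw [Real.norm_eq_abs,
      abs_of_nonneg (mul_nonneg (Real.rpow_nonneg (abs_nonneg _) _) hDτpos)]
    rcases eq_or_ne (h x) 0 with h0 | h0
    · rw [h0]
      simp only [zero_mul, mul_zero, le_refl]
    · rw [hT'eq x h0]
      have step1 : |∑ k ∈ Finset.range (p + 1), a k * T x ^ (p - k)| ≤ M * (1 + |T x|) ^ p := by
        refine (Finset.abs_sum_le_sum_abs _ _).trans ?_
        rw [hM, Finset.sum_mul]
        refine Finset.sum_le_sum fun k hk => ?_
        rw [abs_mul, abs_pow]
        refine mul_le_mul_of_nonneg_left ?_ (abs_nonneg _)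
        calc |T x| ^ (p - k) ≤ (1 + |T x|) ^ (p - k) := by
              gcongr
              linarith [abs_nonneg (T x)]
          _ ≤ (1 + |T x|) ^ p := pow_le_pow_right₀ hB (Nat.sub_le p k)
      have step2 : |∑ k ∈ Finset.range (p + 1), a k * T x ^ (p - k)| ^ q
          ≤ M ^ q * (1 + |T x|) ^ N := by
        calc |∑ k ∈ Finset.range (p + 1), a k * T x ^ (p - k)| ^ q
            ≤ (M * (1 + |T x|) ^ p) ^ q :=
              Real.rpow_le_rpow (abs_nonneg _) step1 hq.le
          _ = M ^ q * ((1 + |T x|) ^ p) ^ q := Real.mul_rpow hM0 (by positivity)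
          _ ≤ M ^ q * (1 + |T x|) ^ N := by
              refine mul_le_mul_of_nonneg_left ?_ (Real.rpow_nonneg hM0 q)
              rw [← Real.rpow_natCast (1 + |T x|) p, ← Real.rpow_mul (by linarith),
                ← Real.rpow_natCast (1 + |T x|) N]
              exact Real.rpow_le_rpow_of_exponent_le hB (Nat.le_ceil _)
      calc |∑ k ∈ Finset.range (p + 1), a k * T x ^ (p - k)| ^ q * (h x * g τ * Real.exp (τ * T x))
          ≤ M ^ q * (1 + |T x|) ^ N * (h x * g τ * Real.exp (τ * T x)) :=
            mul_le_mul_of_nonneg_right step2 hDτpos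
        _ = M ^ q * ((1 + |T x|) ^ N * (h x * g τ * Real.exp (τ * T x))) := by ring
  refine hFint.congr (Filter.Eventually.of_forall fun x => ?_)
  simp only []
  rcases eq_or_ne (h x) 0 with h0 | h0
  · rw [h0]; ring
  · rw [hT'eq x h0]


/-- for an exponential family `f(x,θ) = h(x) g(θ) e^{θ T(x)}` with
compact `Θ` whose ε-neighbourhood lies in the open natural parameter set `Θ₀`,
the quantity `E_{p,q}(θ,θ',θ'') = 𝔼_θ |f^{(p)}(·,θ')/f(·,θ'')|^q` is finite whenever
`|θ' - θ''| < ε/q`, and equals the stated closed form. -/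
theorem stmt_12 (lam : Measure ℝ) [SigmaFinite lam]
    (h T g : ℝ → ℝ) (Θ0 Θ : Set ℝ) (hΘ0 : IsOpen Θ0) (hΘ : IsCompact Θ)
    (hΘsub : Θ ⊆ Θ0) (ε : ℝ) (hε : 0 < ε) (hnbhd : ∀ θ ∈ Θ, Metric.ball θ ε ⊆ Θ0)
    (hg : ContDiff ℝ (⊤ : ℕ∞) g) (hgpos : ∀ θ ∈ Θ0, 0 < g θ) (hh : ∀ x, 0 ≤ h x)
    (hdens : ∀ θ ∈ Θ0, ∫ x, h x * g θ * Real.exp (θ * T x) ∂lam = 1)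
    (hmom : ∀ θ ∈ Θ0, ∀ r : ℕ,
      Integrable (fun x => |T x| ^ r * (h x * g θ * Real.exp (θ * T x))) lam)
    (p : ℕ) (q : ℝ) (hq : 0 < q)
    (θ θ' θ'' : ℝ) (hθ : θ ∈ Θ) (hθ' : θ' ∈ Θ) (hθ'' : θ'' ∈ Θ)
    (hclose : |θ' - θ''| < ε / q) :
    Integrable (fun x =>
        |iteratedDeriv p (fun t => h x * g t * Real.exp (t * T x)) θ' /
            (h x * g θ'' * Real.exp (θ'' * T x))| ^ q *
          (h x * g θ * Real.exp (θ * T x))) lam ∧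
    ∫ x, |iteratedDeriv p (fun t => h x * g t * Real.exp (t * T x)) θ' /
            (h x * g θ'' * Real.exp (θ'' * T x))| ^ q *
          (h x * g θ * Real.exp (θ * T x)) ∂lam
      = g θ / (g θ'' ^ q * g (θ + q * (θ' - θ''))) *
        ∫ x, |∑ k ∈ Finset.range (p + 1),
              (p.choose k : ℝ) * iteratedDeriv k g θ' * T x ^ (p - k)| ^ q *
          (h x * g (θ + q * (θ' - θ'')) * Real.exp ((θ + q * (θ' - θ'')) * T x)) ∂lam := by
  have hθ0 : θ ∈ Θ0 := hΘsub hθ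
  have hθ''0 : θ'' ∈ Θ0 := hΘsub hθ''
  have hτ0 : θ + q * (θ' - θ'') ∈ Θ0 := by
    apply hnbhd θ hθ
    rw [Metric.mem_ball, Real.dist_eq]
    have : |θ + q * (θ' - θ'') - θ| = q * |θ' - θ''| := by
      rw [show θ + q * (θ' - θ'') - θ = q * (θ' - θ'') by ring, abs_mul, abs_of_pos hq]
    rw [this]
    calc q * |θ' - θ''| < q * (ε / q) := by
          exact mul_lt_mul_of_pos_left hclose hq
      _ = ε := by field_simp
  have hθ₂0 : θ + ε / 2 ∈ Θ0 := by
    apply hnbhd θ hθ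
    rw [Metric.mem_ball, Real.dist_eq]
    rw [show θ + ε / 2 - θ = ε / 2 by ring, abs_of_pos (by linarith)]
    linarith
  -- measurable surrogate for T
  have hT' : ∃ T' : ℝ → ℝ, AEMeasurable T' lam ∧ ∀ x, h x ≠ 0 → T' x = T x := by
    refine ⟨fun x => Real.log ((h x * g (θ + ε / 2) * Real.exp ((θ + ε / 2) * T x)) /
        (h x * g θ * Real.exp (θ * T x)) * (g θ / g (θ + ε / 2))) / (ε / 2), ?_, ?_⟩
    · have hD₁m : AEMeasurable (fun x => h x * g θ * Real.exp (θ * T x)) lam := by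
        have := (hmom θ hθ0 0).aemeasurable; simpa using this
      have hD₂m : AEMeasurable (fun x => h x * g (θ + ε / 2) * Real.exp ((θ + ε / 2) * T x)) lam := by
        have := (hmom (θ + ε / 2) hθ₂0 0).aemeasurable; simpa using this
      exact (Real.measurable_log.comp_aemeasurable
        ((hD₂m.div hD₁m).mul aemeasurable_const)).div aemeasurable_const
    · intro x hx
      have hxpos : 0 < h x := lt_of_le_of_ne (hh x) (Ne.symm hx)
      have h1 : 0 < g θ := hgpos θ hθ0
      have h2 : 0 < g (θ + ε / 2) := hgpos _ hθ₂0
      have hratio : (h x * g (θ + ε / 2) * Real.exp ((θ + ε / 2) * T x)) /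
          (h x * g θ * Real.exp (θ * T x)) * (g θ / g (θ + ε / 2))
          = Real.exp (ε / 2 * T x) := by
        rw [show Real.exp ((θ + ε / 2) * T x)
            = Real.exp (ε / 2 * T x) * Real.exp (θ * T x) by
            rw [← Real.exp_add]; congr 1; ring]
        set G := g (θ + ε / 2) with hGdef
        have hG : G ≠ 0 := h2.ne'
        field_simp
      simp only []
      rw [hratio, Real.log_exp]
      field_simp
  obtain ⟨T', hT'm, hT'eq⟩ := hT'
  have hInt2 : Integrable (fun x => |∑ k ∈ Finset.range (p + 1),
        (p.choose k : ℝ) * iteratedDeriv k g θ' * T x ^ (p - k)| ^ q *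
      (h x * g (θ + q * (θ' - θ'')) * Real.exp ((θ + q * (θ' - θ'')) * T x))) lam :=
    aux_int lam h T g Θ0 hgpos hh hmom q hq p
      (fun k => (p.choose k : ℝ) * iteratedDeriv k g θ') _ hτ0 T' hT'm hT'eq
  have heq : (fun x =>
        |iteratedDeriv p (fun t => h x * g t * Real.exp (t * T x)) θ' /
            (h x * g θ'' * Real.exp (θ'' * T x))| ^ q *
          (h x * g θ * Real.exp (θ * T x)))
      = fun x => g θ / (g θ'' ^ q * g (θ + q * (θ' - θ''))) *
        (|∑ k ∈ Finset.range (p + 1),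
              (p.choose k : ℝ) * iteratedDeriv k g θ' * T x ^ (p - k)| ^ q *
          (h x * g (θ + q * (θ' - θ'')) * Real.exp ((θ + q * (θ' - θ'')) * T x))) :=
    funext fun x => aux_ptwise h T g hg q θ θ' θ'' hq (hgpos θ'' hθ''0) (hgpos _ hτ0) hh p x
  constructor
  · rw [heq]
    exact hInt2.const_mul _
  · rw [heq, integral_const_mul]
end

section
/- Let $\Delta G = \sum_{j \in J} \pi_j \delta_{\theta_j}$ be a signed measure on compact $\Theta$ with $\sum_{j\in J}\pi_j = 0$. Let $J' \subsetneq J$, set $\mathfrak{e} = \min_{j \notin J'}|\theta_j - \theta_{J'}|$ and $\mathfrak{d} = \max_{j \in J'}|\theta_j - \theta_{J'}|$ for some base point $\theta_{J'} \in \{\theta_j : j \in J'\}$, and assume $\mathfrak{e} \ge \mathfrak{d}$. Then $\sup_{|f|_{\mathrm{Lip}} \le 1} \sum_{j \in J} \pi_j f(\theta_j) \ge |\sum_{j \in J'} \pi_j| \cdot (\mathfrak{e} - \mathfrak{d})$. -/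
lemma lip_aux (b d e : ℝ) :
    LipschitzWith 1 (fun x : ℝ => min (e - d) (max (|x - b| - d) 0)) := by
  have h2 : LipschitzWith 1 (fun x : ℝ => |x - b| - d) := by
    refine LipschitzWith.of_dist_le_mul fun x y => ?_
    simp only [Real.dist_eq, NNReal.coe_one, one_mul, sub_sub_sub_cancel_right]
    have h := abs_abs_sub_abs_le_abs_sub (x - b) (y - b)
    have he : (x - b) - (y - b) = x - y := by ring
    rw [he] at h
    exact h
  exact (h2.max_const 0).const_min (e - d)

/-- for a signed combination `∑_j π_j δ_{θ_j}` with total mass zero,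
and `J'` a proper subset whose atoms lie within `𝔡` of a base point `θ_{j₀}` while
all other atoms are at distance at least `𝔢 ≥ 𝔡`, the supremum of
`∑_j π_j f(θ_j)` over 1-Lipschitz `f` is at least `|∑_{j ∈ J'} π_j| (𝔢 - 𝔡)`. -/
theorem stmt_15 (N : ℕ) (w θ : Fin N → ℝ) (hsum : ∑ j, w j = 0)
    (J' : Finset (Fin N)) (hJ' : J' ≠ Finset.univ) (j0 : Fin N) (hj0 : j0 ∈ J')
    (e d : ℝ) (hd0 : 0 ≤ d) (hed : d ≤ e)
    (he : ∀ j ∉ J', e ≤ |θ j - θ j0|) (hd : ∀ j ∈ J', |θ j - θ j0| ≤ d) :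
    |∑ j ∈ J', w j| * (e - d) ≤
      ⨆ f : {f : ℝ → ℝ // LipschitzWith 1 f}, ∑ j, w j * f.1 (θ j) := by
  set c := ∑ j ∈ J', w j with hc
  -- the family is bounded above
  have hbdd : BddAbove (Set.range fun f : {f : ℝ → ℝ // LipschitzWith 1 f} =>
      ∑ j, w j * f.1 (θ j)) := by
    refine ⟨∑ j, |w j| * |θ j - θ j0|, ?_⟩
    rintro x ⟨f, rfl⟩
    dsimp only
    have : (∑ j, w j * f.1 (θ j)) = ∑ j, w j * (f.1 (θ j) - f.1 (θ j0)) := by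
      simp only [mul_sub, Finset.sum_sub_distrib, ← Finset.sum_mul, hsum, zero_mul, sub_zero]
    rw [this]
    refine Finset.sum_le_sum fun j _ => ?_
    calc w j * (f.1 (θ j) - f.1 (θ j0)) ≤ |w j * (f.1 (θ j) - f.1 (θ j0))| := le_abs_self _
      _ = |w j| * |f.1 (θ j) - f.1 (θ j0)| := abs_mul _ _
      _ ≤ |w j| * |θ j - θ j0| := by
          refine mul_le_mul_of_nonneg_left ?_ (abs_nonneg _)
          have := f.2.dist_le_mul (θ j) (θ j0)
          simpa [Real.dist_eq] using this
  -- helper function g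
  set g : ℝ → ℝ := fun x => min (e - d) (max (|x - θ j0| - d) 0) with hg
  have hglip : LipschitzWith 1 g := lip_aux (θ j0) d e
  have hg_in : ∀ j ∈ J', g (θ j) = 0 := by
    intro j hj
    have h1 : |θ j - θ j0| - d ≤ 0 := by linarith [hd j hj]
    simp [hg, max_eq_right h1, min_eq_right (by linarith : (0:ℝ) ≤ e - d)]
  have hg_out : ∀ j ∉ J', g (θ j) = e - d := by
    intro j hj
    have h1 : e - d ≤ |θ j - θ j0| - d := by linarith [he j hj]
    have h2 : (0:ℝ) ≤ |θ j - θ j0| - d := by linarith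
    simp [hg, max_eq_left h2, min_eq_left h1]
  have hcompl : ∑ j ∈ J'ᶜ, w j = -c := by
    have := Finset.sum_add_sum_compl J' w
    rw [hsum] at this; linarith
  have key2 : (∑ j, w j * g (θ j)) = -c * (e - d) := by
    rw [← Finset.sum_add_sum_compl J' (fun j => w j * g (θ j))]
    have h1 : ∑ j ∈ J', w j * g (θ j) = 0 :=
      Finset.sum_eq_zero fun j hj => by rw [hg_in j hj, mul_zero]
    have h2 : ∑ j ∈ J'ᶜ, w j * g (θ j) = (e - d) * ∑ j ∈ J'ᶜ, w j := by
      rw [Finset.mul_sum]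
      exact Finset.sum_congr rfl fun j hj => by
        rw [hg_out j (by simpa using hj)]; ring
    rw [h1, h2, hcompl]; ring
  have key1 : (∑ j, w j * (-(g (θ j)))) = c * (e - d) := by
    simp only [mul_neg, Finset.sum_neg_distrib, key2]; ring
  rcases le_total 0 c with h | h
  · have hf : LipschitzWith 1 (fun x => -(g x)) := hglip.neg
    have hle := le_ciSup hbdd (⟨fun x => -(g x), hf⟩ : {f : ℝ → ℝ // LipschitzWith 1 f})
    calc |c| * (e - d) = c * (e - d) := by rw [abs_of_nonneg h]
      _ = ∑ j, w j * (-(g (θ j))) := key1.symm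
      _ ≤ _ := hle
  · have hle := le_ciSup hbdd (⟨g, hglip⟩ : {f : ℝ → ℝ // LipschitzWith 1 f})
    calc |c| * (e - d) = -c * (e - d) := by rw [abs_of_nonpos h]
      _ = ∑ j, w j * g (θ j) := key2.symm
      _ ≤ _ := hle
end
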